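/- Let κ ≥ 0 and let g : ℝ³ \ {0} → ℝ be given by g(z) = (1 − e^{−κ‖z‖})/(4π‖z‖). Then g is twice differentiable on ℝ³ \ {0}, and there is a constant C > 0 (depending only on κ) such that for every z ≠ 0 the operator norm of the Hessian of g at z satisfies ‖D²g(z)‖ ≤ C(1 + 1/‖z‖). In particular, the second-derivative kernel K₄(x,y), built from the difference of second mixed normal derivatives of G_κ and G₀, has a singularity of order only O(1/‖x−y‖) on the diagonal even though each of its two terms separately blows up like ‖x−y‖⁻³. -/

import Mathlib

/-!
The kernel is radial, `g(z) = φ(‖z‖)` with `φ(r) = (1 − e^{−κr})/(4πr)`, and the Hessian of a radial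
function is `(φ'(r)/r) I + (φ''(r) − φ'(r)/r) ẑ ⊗ ẑ`, of norm at most `|φ''(r)| + 2|φ'(r)|/r`.
Subtracting `e^{−κr}/r` from `1/r` cancels the leading terms of their derivatives:
`φ'(r) = −γ(2, κr)/(4πr²)` and `φ''(r) = γ(3, κr)/(4πr³)`, where `γ(n+1, x) = ∫₀ˣ tⁿe^{−t} dt`
lies in `[0, x^{n+1}/(n+1)]`. Hence `φ'` and `φ''` stay bounded, by `κ²/(8π)` and `κ³/(12π)`.
-/

open Real

noncomputable section

/-- The difference kernel `g(z) = (1 − e^{−κ‖z‖})/(4π‖z‖) = (G₀ − G_κ)(x, x+z)`. -/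
def diffKernel (κ : ℝ) (z : EuclideanSpace ℝ (Fin 3)) : ℝ :=
  (1 - Real.exp (-κ * ‖z‖)) / (4 * π * ‖z‖)

theorem le_of_hasDerivAt_le_of_nonneg {f g f' g' : ℝ → ℝ} (hf : ∀ t, HasDerivAt f (f' t) t)
    (hg : ∀ t, HasDerivAt g (g' t) t) (h0 : f 0 ≤ g 0) (hle : ∀ t, 0 ≤ t → f' t ≤ g' t)
    {x : ℝ} (hx : 0 ≤ x) : f x ≤ g x := by
  have hmono : MonotoneOn (fun t => g t - f t) (Set.Ici 0) :=
    monotoneOn_of_hasDerivWithinAt_nonneg (convex_Ici 0)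
      (fun t _ => ((hg t).sub (hf t)).continuousAt.continuousWithinAt)
      (fun t _ => ((hg t).sub (hf t)).hasDerivWithinAt)
      (fun t ht => sub_nonneg.2 (hle t (interior_subset ht)))
  have := hmono Set.self_mem_Ici hx hx
  linarith

theorem bounds_of_hasDerivAt_pow_mul_exp_neg {F : ℝ → ℝ} (n : ℕ)
    (hF : ∀ t, HasDerivAt F (t ^ n * exp (-t)) t) (h0 : F 0 = 0) {x : ℝ} (hx : 0 ≤ x) :
    0 ≤ F x ∧ F x ≤ x ^ (n + 1) / (n + 1) := by
  constructor
  · exact le_of_hasDerivAt_le_of_nonneg (fun t => hasDerivAt_const t 0) hF h0.ge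
      (fun t ht => by positivity) hx
  · have hpow : ∀ t : ℝ, HasDerivAt (fun s : ℝ => s ^ (n + 1) / (n + 1)) (t ^ n) t := fun t => by
      refine ((hasDerivAt_pow (n + 1) t).div_const ((n : ℝ) + 1)).congr_deriv ?_
      push_cast
      field_simp
    refine le_of_hasDerivAt_le_of_nonneg hF hpow (by simp [h0]) (fun t ht => ?_) hx
    exact mul_le_of_le_one_right (by positivity) (exp_le_one_iff.2 (by linarith))

/-- The lower incomplete gamma function `γ(2, x) = ∫₀ˣ t e^{−t} dt`. -/
def lowerGamma2 (x : ℝ) : ℝ := 1 - (1 + x) * exp (-x)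

/-- The lower incomplete gamma function `γ(3, x) = ∫₀ˣ t² e^{−t} dt`. -/
def lowerGamma3 (x : ℝ) : ℝ := 2 - (x ^ 2 + 2 * x + 2) * exp (-x)

theorem hasDerivAt_exp_neg (x : ℝ) : HasDerivAt (fun t => exp (-t)) (-exp (-x)) x := by
  simpa using (hasDerivAt_neg x).exp

theorem hasDerivAt_lowerGamma2 (x : ℝ) : HasDerivAt lowerGamma2 (x ^ 1 * exp (-x)) x := by
  refine ((((hasDerivAt_id x).const_add 1).mul (hasDerivAt_exp_neg x)).const_sub 1).congr_deriv ?_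
  simp only [id]
  ring

theorem hasDerivAt_lowerGamma3 (x : ℝ) : HasDerivAt lowerGamma3 (x ^ 2 * exp (-x)) x := by
  have hpoly : HasDerivAt (fun t : ℝ => t ^ 2 + 2 * t + 2) (2 * x + 2) x := by
    simpa using ((hasDerivAt_pow 2 x).add ((hasDerivAt_id x).const_mul 2)).add_const 2
  refine ((hpoly.mul (hasDerivAt_exp_neg x)).const_sub 2).congr_deriv ?_
  ring

theorem lowerGamma2_bounds {x : ℝ} (hx : 0 ≤ x) :
    0 ≤ lowerGamma2 x ∧ lowerGamma2 x ≤ x ^ 2 / 2 := by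
  simpa [one_add_one_eq_two] using
    bounds_of_hasDerivAt_pow_mul_exp_neg 1 hasDerivAt_lowerGamma2 (by simp [lowerGamma2]) hx

theorem lowerGamma3_bounds {x : ℝ} (hx : 0 ≤ x) :
    0 ≤ lowerGamma3 x ∧ lowerGamma3 x ≤ x ^ 3 / 3 := by
  have h := bounds_of_hasDerivAt_pow_mul_exp_neg 2 hasDerivAt_lowerGamma3 (by simp [lowerGamma3]) hx
  norm_num at h
  exact h

def diffKernelProfile (κ r : ℝ) : ℝ := (1 - exp (-κ * r)) / (4 * π * r)

def diffKernelProfileDeriv (κ r : ℝ) : ℝ := -lowerGamma2 (κ * r) / (4 * π * r ^ 2)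

def diffKernelProfileDeriv2 (κ r : ℝ) : ℝ := lowerGamma3 (κ * r) / (4 * π * r ^ 3)

theorem diffKernel_eq_comp_norm (κ : ℝ) :
    diffKernel κ = fun z => diffKernelProfile κ ‖z‖ := rfl

theorem hasDerivAt_diffKernelProfile (κ : ℝ) {r : ℝ} (hr : r ≠ 0) :
    HasDerivAt (diffKernelProfile κ) (diffKernelProfileDeriv κ r) r := by
  have hnum : HasDerivAt (fun s => 1 - exp (-κ * s)) (exp (-κ * r) * κ) r := by
    simpa using (((hasDerivAt_id r).const_mul (-κ)).exp).const_sub 1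
  have hden : HasDerivAt (fun s => 4 * π * s) (4 * π) r := by
    simpa using (hasDerivAt_id r).const_mul (4 * π)
  refine (hnum.div hden (by positivity)).congr_deriv ?_
  rw [diffKernelProfileDeriv, lowerGamma2]
  field_simp
  ring_nf

theorem hasDerivAt_diffKernelProfileDeriv (κ : ℝ) {r : ℝ} (hr : r ≠ 0) :
    HasDerivAt (diffKernelProfileDeriv κ) (diffKernelProfileDeriv2 κ r) r := by
  have hnum : HasDerivAt (fun s => -lowerGamma2 (κ * s)) (-(κ * r * exp (-(κ * r)) * κ)) r := by
    refine ((hasDerivAt_lowerGamma2 (κ * r)).comp r ((hasDerivAt_id r).const_mul κ)).neg.congr_deriv ?_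
    simp
  have hden : HasDerivAt (fun s => 4 * π * s ^ 2) (4 * π * (2 * r)) r := by
    simpa using (hasDerivAt_pow 2 r).const_mul (4 * π)
  refine (hnum.div hden (by positivity)).congr_deriv ?_
  rw [diffKernelProfileDeriv2, lowerGamma2, lowerGamma3]
  field_simp
  ring

theorem abs_diffKernelProfileDeriv_le {κ r : ℝ} (hκ : 0 ≤ κ) (hr : 0 < r) :
    |diffKernelProfileDeriv κ r| ≤ κ ^ 2 / (8 * π) := by
  obtain ⟨hlo, hhi⟩ := lowerGamma2_bounds (mul_nonneg hκ hr.le)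
  rw [diffKernelProfileDeriv, abs_div, abs_neg, abs_of_nonneg hlo, abs_of_pos (by positivity),
    div_le_iff₀ (by positivity)]
  calc lowerGamma2 (κ * r) ≤ (κ * r) ^ 2 / 2 := hhi
    _ = κ ^ 2 / (8 * π) * (4 * π * r ^ 2) := by field_simp; ring

theorem abs_diffKernelProfileDeriv2_le {κ r : ℝ} (hκ : 0 ≤ κ) (hr : 0 < r) :
    |diffKernelProfileDeriv2 κ r| ≤ κ ^ 3 / (12 * π) := by
  obtain ⟨hlo, hhi⟩ := lowerGamma3_bounds (mul_nonneg hκ hr.le)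
  rw [diffKernelProfileDeriv2, abs_div, abs_of_nonneg hlo, abs_of_pos (by positivity),
    div_le_iff₀ (by positivity)]
  calc lowerGamma3 (κ * r) ≤ (κ * r) ^ 3 / 3 := hhi
    _ = κ ^ 3 / (12 * π) * (4 * π * r ^ 3) := by field_simp; ring

section Radial

variable {E : Type*} [NormedAddCommGroup E] [InnerProductSpace ℝ E]

/-- `innerSL ℝ` with the type `E →L[ℝ] E →L[ℝ] ℝ` of a second derivative instead of its
conjugate-linear type `E →L⋆[ℝ] E →L[ℝ] ℝ`, which does not add to maps of the former type. -/
def realInnerSL : E →L[ℝ] E →L[ℝ] ℝ := innerSL ℝ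

theorem realInnerSL_apply (z : E) : realInnerSL z = innerSL ℝ z := rfl

theorem hasFDerivAt_norm_of_ne_zero {z : E} (hz : z ≠ 0) :
    HasFDerivAt (fun x : E => ‖x‖) (‖z‖⁻¹ • realInnerSL z) z := by
  have h := (hasStrictFDerivAt_norm_sq z).hasFDerivAt.sqrt (by positivity)
  simp only [sqrt_sq (norm_nonneg _)] at h
  refine h.congr_fderiv ?_
  ext v
  simp only [smul_apply, coe_innerSL_apply, nsmul_eq_mul, Nat.cast_ofNat, smul_eq_mul,
    realInnerSL_apply]
  field_simp

theorem HasDerivAt.hasFDerivAt_comp_norm {φ : ℝ → ℝ} {φ' : ℝ} {z : E}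
    (hφ : HasDerivAt φ φ' ‖z‖) (hz : z ≠ 0) :
    HasFDerivAt (fun x : E => φ ‖x‖) ((φ' / ‖z‖) • realInnerSL z) z :=
  (hφ.comp_hasFDerivAt z (hasFDerivAt_norm_of_ne_zero hz)).congr_fderiv
    (by rw [smul_smul, div_eq_mul_inv])

theorem HasDerivAt.hasFDerivAt_smul_realInnerSL_comp_norm {ψ : ℝ → ℝ} {ψ' : ℝ} {z : E}
    (hψ : HasDerivAt ψ ψ' ‖z‖) (hz : z ≠ 0) :
    HasFDerivAt (fun x : E => ψ ‖x‖ • realInnerSL x)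
      (ψ ‖z‖ • realInnerSL + ((ψ' / ‖z‖) • realInnerSL z).smulRight (realInnerSL z)) z :=
  (hψ.hasFDerivAt_comp_norm hz).smul realInnerSL.hasFDerivAt

theorem norm_smul_realInnerSL_add_smulRight_le (a b : ℝ) (z : E) :
    ‖a • realInnerSL + (b • realInnerSL z).smulRight (realInnerSL z)‖ ≤ |a| + |b| * ‖z‖ ^ 2 := by
  have h₁ : ‖a • (realInnerSL : E →L[ℝ] E →L[ℝ] ℝ)‖ ≤ |a| :=
    calc _ ≤ ‖a‖ * ‖(realInnerSL : E →L[ℝ] E →L[ℝ] ℝ)‖ := ContinuousLinearMap.opNorm_smul_le _ _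
      _ ≤ |a| * 1 := by rw [Real.norm_eq_abs]; gcongr; exact norm_innerSL_le (E := E) ℝ
      _ = |a| := mul_one _
  have h₂ : ‖(b • realInnerSL z).smulRight (realInnerSL z)‖ = |b| * ‖z‖ ^ 2 := by
    rw [ContinuousLinearMap.norm_smulRight_apply, norm_smul, realInnerSL_apply, innerSL_apply_norm,
      Real.norm_eq_abs, mul_assoc, ← sq]
  exact (ContinuousLinearMap.opNorm_add_le _ _).trans (add_le_add h₁ h₂.le)

theorem norm_fderiv_fderiv_comp_norm_le {φ φ' φ'' : ℝ → ℝ} {z : E} (hz : z ≠ 0)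
    (hφ : ∀ r, 0 < r → HasDerivAt φ (φ' r) r) (hφ' : HasDerivAt φ' (φ'' ‖z‖) ‖z‖) :
    ‖fderiv ℝ (fderiv ℝ fun x : E => φ ‖x‖) z‖ ≤ |φ'' ‖z‖| + 2 * |φ' ‖z‖| / ‖z‖ := by
  have hr : 0 < ‖z‖ := norm_pos_iff.2 hz
  have hD : fderiv ℝ (fun x : E => φ ‖x‖) =ᶠ[nhds z] fun x => (φ' ‖x‖ / ‖x‖) • realInnerSL x := by
    filter_upwards [isOpen_compl_singleton.mem_nhds hz] with x hx
    exact ((hφ _ (norm_pos_iff.2 hx)).hasFDerivAt_comp_norm hx).fderiv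
  have hψ : HasDerivAt (fun r => φ' r / r) ((φ'' ‖z‖ * ‖z‖ - φ' ‖z‖) / ‖z‖ ^ 2) ‖z‖ :=
    (hφ'.div (hasDerivAt_id' _) hr.ne').congr_deriv (by ring)
  rw [hD.fderiv_eq, (hψ.hasFDerivAt_smul_realInnerSL_comp_norm hz).fderiv]
  refine (norm_smul_realInnerSL_add_smulRight_le _ _ _).trans ?_
  have htri : |φ'' ‖z‖ * ‖z‖ - φ' ‖z‖| ≤ |φ'' ‖z‖| * ‖z‖ + |φ' ‖z‖| := by
    simpa [abs_mul, abs_of_pos hr] using abs_sub (φ'' ‖z‖ * ‖z‖) (φ' ‖z‖)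
  calc |φ' ‖z‖ / ‖z‖| + |(φ'' ‖z‖ * ‖z‖ - φ' ‖z‖) / ‖z‖ ^ 2 / ‖z‖| * ‖z‖ ^ 2
      = |φ' ‖z‖| / ‖z‖ + |φ'' ‖z‖ * ‖z‖ - φ' ‖z‖| / ‖z‖ := by
        rw [abs_div, abs_div, abs_div, abs_of_pos hr, abs_of_pos (pow_pos hr 2)]
        field_simp
    _ ≤ |φ' ‖z‖| / ‖z‖ + (|φ'' ‖z‖| * ‖z‖ + |φ' ‖z‖|) / ‖z‖ := by gcongr
    _ = |φ'' ‖z‖| + 2 * |φ' ‖z‖| / ‖z‖ := by field_simp; ring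

end Radial

theorem contDiffAt_diffKernel (κ : ℝ) {n : WithTop ℕ∞} {z : EuclideanSpace ℝ (Fin 3)} (hz : z ≠ 0) :
    ContDiffAt ℝ n (diffKernel κ) z := by
  have hr : ‖z‖ ≠ 0 := norm_ne_zero_iff.2 hz
  have hprofile : ContDiffAt ℝ n (diffKernelProfile κ) ‖z‖ :=
    (contDiffAt_const.sub (contDiffAt_const.mul contDiffAt_id).exp).div
      (contDiffAt_const.mul contDiffAt_id) (by positivity)
  rw [diffKernel_eq_comp_norm]
  exact hprofile.comp z (contDiffAt_norm ℝ hz)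

theorem norm_fderiv_fderiv_diffKernel_le {κ : ℝ} (hκ : 0 ≤ κ) {z : EuclideanSpace ℝ (Fin 3)}
    (hz : z ≠ 0) :
    ‖fderiv ℝ (fderiv ℝ (diffKernel κ)) z‖ ≤ κ ^ 3 / (12 * π) + κ ^ 2 / (4 * π) / ‖z‖ := by
  have hr : 0 < ‖z‖ := norm_pos_iff.2 hz
  rw [diffKernel_eq_comp_norm]
  refine (norm_fderiv_fderiv_comp_norm_le hz (fun r hr => hasDerivAt_diffKernelProfile κ hr.ne')
    (hasDerivAt_diffKernelProfileDeriv κ hr.ne')).trans ?_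
  have h₁ := abs_diffKernelProfileDeriv_le hκ hr
  have h₂ := abs_diffKernelProfileDeriv2_le hκ hr
  calc _ ≤ κ ^ 3 / (12 * π) + 2 * (κ ^ 2 / (8 * π)) / ‖z‖ := by gcongr
    _ = κ ^ 3 / (12 * π) + κ ^ 2 / (4 * π) / ‖z‖ := by ring

/-- For `κ ≥ 0`, the kernel `g(z) = (1 − e^{−κ‖z‖})/(4π‖z‖)` is twice differentiable away from
the origin, and there is `C > 0` (depending only on `κ`) such that the operator norm of its
Hessian satisfies `‖D²g(z)‖ ≤ C(1 + 1/‖z‖)` for every `z ≠ 0`: the second-derivative kernel has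
a singularity of order only `O(1/‖z‖)`. -/
theorem diffKernel_hessian_weakly_singular (κ : ℝ) (hκ : 0 ≤ κ) :
    ContDiffOn ℝ 2 (diffKernel κ) {(0 : EuclideanSpace ℝ (Fin 3))}ᶜ ∧
    ∃ C > 0, ∀ z : EuclideanSpace ℝ (Fin 3), z ≠ 0 →
      ‖fderiv ℝ (fderiv ℝ (diffKernel κ)) z‖ ≤ C * (1 + 1 / ‖z‖) := by
  refine ⟨fun z hz => (contDiffAt_diffKernel κ hz).contDiffWithinAt,
    κ ^ 3 / (12 * π) + κ ^ 2 / (4 * π) + 1, by positivity, fun z hz => ?_⟩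
  calc _ ≤ κ ^ 3 / (12 * π) + κ ^ 2 / (4 * π) / ‖z‖ := norm_fderiv_fderiv_diffKernel_le hκ hz
    _ ≤ (κ ^ 3 / (12 * π) + κ ^ 2 / (4 * π) + 1) * (1 + 1 / ‖z‖) := by
      rw [mul_add, mul_one, mul_one_div]
      gcongr <;> linarith [show 0 ≤ κ ^ 2 / (4 * π) by positivity,
        show 0 ≤ κ ^ 3 / (12 * π) by positivity]

end
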